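/- In the 3-player zero-sum game H1(u) with u > 0, where each player has actions {G,⊥} and payoffs given by: (G,G,G)→(2u,−u,−u), (G,G,⊥)→(1,−1,0), (G,⊥,G)→(1,0,−1), (G,⊥,⊥)→(−4,2,2), (⊥,G,G)→(0,0,0), (⊥,G,⊥)→(2,−3,1), (⊥,⊥,G)→(2,1,−3), (⊥,⊥,⊥)→(−2,1,1), the only Nash equilibrium is the pure strategy profile (⊥,⊥,⊥). -/
import Mathlib


open Set

/-- Expected payoff in a 3-player game where each player has two actions
(`true` = G, `false` = ⊥), given the probabilities `p q r` of playing G. -/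
noncomputable def exp3 (f : Bool → Bool → Bool → ℝ) (p q r : ℝ) : ℝ :=
  p*q*r * f true true true + p*q*(1-r) * f true true false +
  p*(1-q)*r * f true false true + p*(1-q)*(1-r) * f true false false +
  (1-p)*q*r * f false true true + (1-p)*q*(1-r) * f false true false +
  (1-p)*(1-q)*r * f false false true + (1-p)*(1-q)*(1-r) * f false false false

/-- Payoff to player `i` in the game H1(u); `true` = G, `false` = ⊥. -/
noncomputable def H1 (u : ℝ) (i : Fin 3) (a b c : Bool) : ℝ :=
  match a, b, c with
  | true,  true,  true  => ![2*u, -u, -u] i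
  | true,  true,  false => ![1, -1, 0] i
  | true,  false, true  => ![1, 0, -1] i
  | true,  false, false => ![-4, 2, 2] i
  | false, true,  true  => ![0, 0, 0] i
  | false, true,  false => ![2, -3, 1] i
  | false, false, true  => ![2, 1, -3] i
  | false, false, false => ![-2, 1, 1] i

/-- `(p,q,r)` is a (mixed) Nash equilibrium of H1(u). -/
def H1NE (u p q r : ℝ) : Prop :=
  p ∈ Icc (0:ℝ) 1 ∧ q ∈ Icc (0:ℝ) 1 ∧ r ∈ Icc (0:ℝ) 1 ∧
  (∀ p' ∈ Icc (0:ℝ) 1, exp3 (H1 u 0) p' q r ≤ exp3 (H1 u 0) p q r) ∧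
  (∀ q' ∈ Icc (0:ℝ) 1, exp3 (H1 u 1) p q' r ≤ exp3 (H1 u 1) p q r) ∧
  (∀ r' ∈ Icc (0:ℝ) 1, exp3 (H1 u 2) p q r' ≤ exp3 (H1 u 2) p q r)
lemma Spos (u : ℝ) (hu : 0 < u) {x y : ℝ} (hx0 : 0 ≤ x) (hx1 : x ≤ 1)
    (hy0 : 0 ≤ y) (hy1 : y ≤ 1) : 0 < u*x*y + 4 - x - 3*y := by
  rcases lt_or_ge (x + 3*y) 4 with h | h
  · nlinarith [mul_nonneg (mul_nonneg hu.le hx0) hy0]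
  · have hx : x = 1 := le_antisymm hx1 (by linarith)
    have hy : y = 1 := le_antisymm hy1 (by linarith)
    subst hx; subst hy; linarith

theorem stmt0 (u : ℝ) (hu : 0 < u) (p q r : ℝ) :
    H1NE u p q r ↔ p = 0 ∧ q = 0 ∧ r = 0 := by
  have e1 : ∀ p', exp3 (H1 u 0) p' 0 0 = -2 - 2*p' := by
    intro p'; simp [exp3, H1]; ring
  have e2 : ∀ q' p r, exp3 (H1 u 1) p q' r
      = exp3 (H1 u 1) p 0 r - q' * (u*p*r + 4 - p - 3*r) := by
    intro q' p r; simp [exp3, H1]; ring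
  have e3 : ∀ r' p q, exp3 (H1 u 2) p q r'
      = exp3 (H1 u 2) p q 0 - r' * (u*p*q + 4 - p - 3*q) := by
    intro r' p q; simp [exp3, H1]; ring
  constructor
  · rintro ⟨hp, hq, hr, h1, h2, h3⟩
    have hq0 : q = 0 := by
      have hk := h2 0 ⟨le_refl 0, zero_le_one⟩
      rw [e2 q p r] at hk
      have hS := Spos u hu hp.1 hp.2 hr.1 hr.2
      have : q * (u*p*r + 4 - p - 3*r) ≤ 0 := by linarith
      have : q ≤ 0 := by nlinarith
      linarith [hq.1]
    have hr0 : r = 0 := by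
      have hk := h3 0 ⟨le_refl 0, zero_le_one⟩
      rw [e3 r p q] at hk
      have hS := Spos u hu hp.1 hp.2 hq.1 hq.2
      have : r * (u*p*q + 4 - p - 3*q) ≤ 0 := by linarith
      have : r ≤ 0 := by nlinarith
      linarith [hr.1]
    subst hq0; subst hr0
    have hk := h1 0 ⟨le_refl 0, zero_le_one⟩
    rw [e1 p, e1 0] at hk
    exact ⟨by linarith [hp.1], rfl, rfl⟩
  · rintro ⟨hp0, hq0, hr0⟩
    subst hp0; subst hq0; subst hr0
    refine ⟨⟨le_refl 0, zero_le_one⟩, ⟨le_refl 0, zero_le_one⟩, ⟨le_refl 0, zero_le_one⟩,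
      ?_, ?_, ?_⟩
    · intro p' hp'
      rw [e1 p', e1 0]; linarith [hp'.1]
    · intro q' hq'
      rw [e2 q' 0 0, e2 0 0 0]
      have hS := Spos u hu (le_refl (0:ℝ)) zero_le_one (le_refl (0:ℝ)) zero_le_one
      nlinarith [hq'.1]
    · intro r' hr'
      rw [e3 r' 0 0, e3 0 0 0]
      have hS := Spos u hu (le_refl (0:ℝ)) zero_le_one (le_refl (0:ℝ)) zero_le_one
      nlinarith [hr'.1]
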